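/- For every d ≥ 3, the line graph L(D_d) of the d-dragon is a core: every graph homomorphism from L(D_d) to itself is a graph isomorphism. -/

import Mathlib

/-!
Every vertex of `D_d` except the tip `d + 1` has degree `d`, so in a proper `d`-edge-colouring
each colour class is a matching covering these `d + 1` vertices, and covering the tip exactly for
the (at most two) colours of its edges. As `d ≥ 3` both kinds of colour occur, so `d + 1` and
`d + 2` would both be even: `L(D_d)` is not `d`-colourable.

An endomorphism `f` of `L(D_d)` is therefore surjective as soon as `L(D_d)` minus any vertex
is `d`-colourable, which explicit colourings show for `d = 3`. For `d ≥ 4`, cliques of size `d`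
in a line graph are stars, so `f` maps the star at each vertex `v ≠ d + 1` into the star at some
`σ v`. If `σ` is injective, then so is `f`. Otherwise `σ` is constant, since a vertex adjacent
to two vertices with the same image shares that image; then `f` maps into a single star, of size
at most `d`, which is again a `d`-colouring. Finally, an injective endomorphism of a finite graph
is an automorphism.
-/

open SimpleGraph

/-- The edge relation of the `d`-dragon on vertex indices `0,…,d+1`:
vertices `0,…,d` are pairwise adjacent except `0` and `d`, and vertex `d+1`
is adjacent exactly to `0` and `d`. -/
def dragonRel (d : ℕ) (u v : ℕ) : Prop :=
  (u < d + 1 ∧ v < d + 1 ∧ ¬(u = 0 ∧ v = d) ∧ ¬(u = d ∧ v = 0)) ∨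
  (u = d + 1 ∧ (v = 0 ∨ v = d))

/-- The `d`-dragon `D_d`: the graph obtained from `K_{d+1}` by replacing one of its
edges by a path on 3 vertices. -/
def dragon (d : ℕ) : SimpleGraph (Fin (d + 2)) :=
  SimpleGraph.fromRel (fun u v => dragonRel d u.val v.val)

theorem Sym2.eq_or_eq_or_eq_of_mem_or_mem {V : Type*} {a b c : V} (hab : a ≠ b) (hbc : b ≠ c)
    (hca : c ≠ a) {e : Sym2 V} (h₁ : a ∈ e ∨ b ∈ e) (h₂ : b ∈ e ∨ c ∈ e) (h₃ : c ∈ e ∨ a ∈ e) :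
    e = s(a, b) ∨ e = s(b, c) ∨ e = s(c, a) := by
  have pair {x y : V} (hxy : x ≠ y) (hx : x ∈ e) (hy : y ∈ e) : e = s(x, y) :=
    (Sym2.mem_and_mem_iff hxy).mp ⟨hx, hy⟩
  rcases h₁ with ha | hb
  · rcases h₂ with hb | hc
    · exact .inl (pair hab ha hb)
    · exact .inr (.inr (pair hca hc ha))
  · rcases h₃ with hc | ha
    · exact .inr (.inl (pair hbc hb hc))
    · exact .inl (pair hab ha hb)

namespace SimpleGraph

variable {V W α : Type*} {G : SimpleGraph V} {H : SimpleGraph W}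

theorem Hom.exists_iso_of_injective [Finite V] (f : G →g G) (hf : Function.Injective f) :
    ∃ e : G ≃g G, ∀ x, e x = f x := by
  have hE : Function.Surjective f.mapEdgeSet :=
    Finite.injective_iff_surjective.mp (Hom.mapEdgeSet.injective f hf)
  refine ⟨⟨Equiv.ofBijective f ⟨hf, Finite.injective_iff_surjective.mp hf⟩,
    fun {a b} => ⟨fun h => ?_, f.map_adj⟩⟩, fun _ => rfl⟩
  obtain ⟨e, he⟩ := hE ⟨s(f a, f b), h⟩
  have : (e : Sym2 V) = s(a, b) := Sym2.map.injective hf (congrArg Subtype.val he)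
  simpa [this] using e.2

theorem IsClique.injOn_hom {s : Set V} (hs : G.IsClique s) (f : G →g H) : Set.InjOn f s :=
  fun _ hx _ hy hxy => by_contra fun hne => (f.map_adj (hs hx hy hne)).ne hxy

theorem IsClique.image_hom {s : Set V} (hs : G.IsClique s) (f : G →g H) :
    H.IsClique (f '' s) := by
  rintro _ ⟨x, hx, rfl⟩ _ ⟨y, hy, rfl⟩ hne
  exact f.map_adj (hs hx hy fun h => hne (congrArg f h))

theorem colorable_induce_of_ncard_le [Finite V] {s : Set V} {n : ℕ} (h : s.ncard ≤ n) :
    (G.induce s).Colorable n := by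
  have := Fintype.ofFinite s
  exact (colorable_of_fintype _).mono (by rwa [← Nat.card_eq_fintype_card, Nat.card_coe_set_eq])

theorem Colorable.of_hom_of_forall_mem (f : G →g H) {s : Set W} (hf : ∀ x, f x ∈ s) {n : ℕ}
    (hs : (H.induce s).Colorable n) : G.Colorable n :=
  hs.of_hom ⟨fun x => ⟨f x, hf x⟩, f.map_adj⟩

theorem exists_adj_and_coe_eq (e : G.edgeSet) : ∃ a b, G.Adj a b ∧ (e : Sym2 V) = s(a, b) := by
  obtain ⟨⟨a, b⟩, h⟩ := Quot.exists_rep (e : Sym2 V)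
  have he : (e : Sym2 V) = s(a, b) := h.symm
  exact ⟨a, b, G.mem_edgeSet.mp (he ▸ e.2), he⟩

theorem exists_mem_ne_of_mem_edgeSet (e : G.edgeSet) (x : V) : ∃ c ∈ (e : Sym2 V), c ≠ x := by
  obtain ⟨a, b, hab, he⟩ := exists_adj_and_coe_eq e
  by_cases ha : a = x
  · exact ⟨b, he ▸ Sym2.mem_mk_right a b, ha ▸ hab.ne.symm⟩
  · exact ⟨a, he ▸ Sym2.mem_mk_left a b, ha⟩

variable (G) in
/-- `G.incidenceSet v` as a set of vertices of the line graph. -/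
def edgesAt (v : V) : Set G.edgeSet := {e | v ∈ (e : Sym2 V)}

@[simp] theorem mem_edgesAt {v : V} {e : G.edgeSet} : e ∈ G.edgesAt v ↔ v ∈ (e : Sym2 V) :=
  .rfl

theorem lineGraph_adj_of_mem {v : V} {e₁ e₂ : G.edgeSet} (h₁ : v ∈ (e₁ : Sym2 V))
    (h₂ : v ∈ (e₂ : Sym2 V)) (hne : e₁ ≠ e₂) : G.lineGraph.Adj e₁ e₂ :=
  lineGraph_adj_iff_exists.mpr ⟨hne, v, h₁, h₂⟩

theorem isClique_edgesAt (v : V) : G.lineGraph.IsClique (G.edgesAt v) :=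
  fun _ h₁ _ h₂ hne => lineGraph_adj_of_mem h₁ h₂ hne

theorem ncard_edgesAt (v : V) : (G.edgesAt v).ncard = (G.neighborSet v).ncard := by
  classical
  have : Subtype.val '' G.edgesAt v = G.incidenceSet v := by
    ext e; simp [incidenceSet, and_comm]
  rw [← Set.ncard_image_of_injective _ Subtype.val_injective, this, ← Nat.card_coe_set_eq,
    ← Nat.card_coe_set_eq, Nat.card_congr (G.incidenceSetEquivNeighborSet v)]

theorem exists_subset_edgesAt_of_isClique {s : Set G.edgeSet} (hs : G.lineGraph.IsClique s)
    (h : 3 < s.ncard) : ∃ v, s ⊆ G.edgesAt v := by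
  have meet {e e' : G.edgeSet} (he : e ∈ s) (he' : e' ∈ s) (hne : e ≠ e') {x y : V}
      (hxy : (e' : Sym2 V) = s(x, y)) : x ∈ (e : Sym2 V) ∨ y ∈ (e : Sym2 V) := by
    obtain ⟨-, v, hv, hv'⟩ := lineGraph_adj_iff_exists.mp (hs he he' hne)
    rw [hxy, Sym2.mem_iff] at hv'
    rcases hv' with rfl | rfl <;> simp [hv]
  by_contra! hno
  simp only [Set.not_subset, mem_edgesAt] at hno
  obtain ⟨e₁, he₁⟩ : s.Nonempty := Set.nonempty_of_ncard_ne_zero (by omega)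
  obtain ⟨a, b, hadj, hab⟩ := exists_adj_and_coe_eq e₁
  obtain ⟨e₂, he₂, ha₂⟩ := hno a
  obtain ⟨e₃, he₃, hb₃⟩ := hno b
  have hb₂ : b ∈ (e₂ : Sym2 V) :=
    (meet he₂ he₁ (by rintro rfl; simp [hab] at ha₂) hab).resolve_left ha₂
  have ha₃ : a ∈ (e₃ : Sym2 V) :=
    (meet he₃ he₁ (by rintro rfl; simp [hab] at hb₃) hab).resolve_right hb₃
  obtain ⟨c, hbc⟩ := Sym2.mem_iff_exists.mp hb₂
  have hc₃ : c ∈ (e₃ : Sym2 V) :=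
    (meet he₃ he₂ (by rintro rfl; exact hb₃ hb₂) hbc).resolve_left hb₃
  have hca : c ≠ a := by rintro rfl; exact ha₂ (hbc ▸ Sym2.mem_mk_right _ _)
  have hca' : (e₃ : Sym2 V) = s(c, a) := (Sym2.mem_and_mem_iff hca).mp ⟨hc₃, ha₃⟩
  -- an edge meeting all sides of the triangle `abc` is one of them
  have hsub : s ⊆ {e₁, e₂, e₃} := by
    intro e he
    by_contra! hne
    simp only [Set.mem_insert_iff, Set.mem_singleton_iff, not_or] at hne
    obtain ⟨h₁, h₂, h₃⟩ := hne
    rcases Sym2.eq_or_eq_or_eq_of_mem_or_mem hadj.ne (G.mem_edgeSet.mp (hbc ▸ e₂.2)).ne hca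
        (meet he he₁ h₁ hab) (meet he he₂ h₂ hbc) (meet he he₃ h₃ hca') with h | h | h
    · exact h₁ (Subtype.ext (h.trans hab.symm))
    · exact h₂ (Subtype.ext (h.trans hbc.symm))
    · exact h₃ (Subtype.ext (h.trans hca'.symm))
  have h₃ : ({e₁, e₂, e₃} : Set G.edgeSet).ncard ≤ 3 :=
    (Set.ncard_insert_le _ _).trans (Nat.succ_le_succ ((Set.ncard_insert_le _ _).trans (by simp)))
  have := (Set.ncard_le_ncard hsub).trans h₃
  omega

namespace Hom

variable (f : G.lineGraph →g H.lineGraph)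

theorem exists_mapsTo_edgesAt {v : V} (hv : 3 < (G.edgesAt v).ncard) :
    ∃ w, Set.MapsTo f (G.edgesAt v) (H.edgesAt w) := by
  obtain ⟨w, hw⟩ := exists_subset_edgesAt_of_isClique ((isClique_edgesAt v).image_hom f)
    (by rwa [((isClique_edgesAt v).injOn_hom f).ncard_image])
  exact ⟨w, Set.mapsTo_iff_image_subset.mpr hw⟩

theorem eq_of_mapsTo_edgesAt {t u w : V} {x y : W}
    (ht : Set.MapsTo f (G.edgesAt t) (H.edgesAt x)) (hu : Set.MapsTo f (G.edgesAt u) (H.edgesAt y))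
    (hw : Set.MapsTo f (G.edgesAt w) (H.edgesAt y)) (htu : G.Adj t u) (htw : G.Adj t w)
    (huw : u ≠ w) : x = y := by
  by_contra hxy
  let e₁ : G.edgeSet := ⟨s(t, u), htu⟩
  let e₂ : G.edgeSet := ⟨s(t, w), htw⟩
  have h₁ : (f e₁ : Sym2 W) = s(x, y) := (Sym2.mem_and_mem_iff hxy).mp
    ⟨ht (Sym2.mem_mk_left _ _), hu (Sym2.mem_mk_right _ _)⟩
  have h₂ : (f e₂ : Sym2 W) = s(x, y) := (Sym2.mem_and_mem_iff hxy).mp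
    ⟨ht (Sym2.mem_mk_left _ _), hw (Sym2.mem_mk_right _ _)⟩
  have hne : e₁ ≠ e₂ := fun h => huw (Sym2.congr_right.mp (congrArg Subtype.val h))
  exact (f.map_adj (lineGraph_adj_of_mem (Sym2.mem_mk_left _ _) (Sym2.mem_mk_left _ _) hne)).ne
    (Subtype.ext (h₁.trans h₂.symm))

theorem injective_of_injOn (x : V) (σ : V → W)
    (hσ : ∀ v ≠ x, Set.MapsTo f (G.edgesAt v) (H.edgesAt (σ v))) (hinj : Set.InjOn σ {x}ᶜ) :
    Function.Injective f := by
  intro e₁ e₂ heq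
  by_contra hne
  have disjoint : ∀ v ∈ (e₁ : Sym2 V), v ∉ (e₂ : Sym2 V) := fun v h₁ h₂ =>
    (f.map_adj (lineGraph_adj_of_mem h₁ h₂ hne)).ne heq
  wlog hx : x ∉ (e₁ : Sym2 V) generalizing e₁ e₂
  · exact this heq.symm (Ne.symm hne) (fun v h₂ h₁ => disjoint v h₁ h₂)
      (disjoint x (not_not.mp hx))
  obtain ⟨a, b, hadj, hab⟩ := exists_adj_and_coe_eq e₁
  have ha : a ≠ x := fun h => hx (h ▸ hab ▸ Sym2.mem_mk_left a b)
  have hb : b ≠ x := fun h => hx (h ▸ hab ▸ Sym2.mem_mk_right a b)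
  have hσab : σ a ≠ σ b := hinj.ne ha hb hadj.ne
  have hf₁ : (f e₁ : Sym2 W) = s(σ a, σ b) := (Sym2.mem_and_mem_iff hσab).mp
    ⟨hσ a ha (by simp [hab]), hσ b hb (by simp [hab])⟩
  obtain ⟨c, hc, hcx⟩ := exists_mem_ne_of_mem_edgeSet e₂ x
  have hσc : σ c ∈ s(σ a, σ b) := hf₁ ▸ heq ▸ hσ c hcx hc
  rcases Sym2.mem_iff.mp hσc with h | h
  · exact disjoint c (hinj hcx ha h ▸ hab ▸ Sym2.mem_mk_left a b) hc
  · exact disjoint c (hinj hcx hb h ▸ hab ▸ Sym2.mem_mk_right a b) hc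

end Hom

namespace Coloring

variable (C : G.lineGraph.Coloring α)

def colorClassSubgraph (k : α) : G.Subgraph where
  verts := {v | k ∈ C '' G.edgesAt v}
  Adj u v := ∃ h : G.Adj u v, C ⟨s(u, v), h⟩ = k
  adj_sub h := h.1
  edge_vert := fun ⟨h, hk⟩ => ⟨⟨s(_, _), h⟩, Sym2.mem_mk_left _ _, hk⟩
  symm := ⟨fun _ _ ⟨h, hk⟩ => ⟨h.symm, by simpa [Sym2.eq_swap] using hk⟩⟩

@[simp] theorem mem_colorClassSubgraph_verts {k : α} {v : V} :
    v ∈ (C.colorClassSubgraph k).verts ↔ k ∈ C '' G.edgesAt v :=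
  .rfl

theorem isMatching_colorClassSubgraph (k : α) : (C.colorClassSubgraph k).IsMatching := by
  rintro v ⟨e, hv, hk⟩
  obtain ⟨w, hw⟩ := Sym2.mem_iff_exists.mp hv
  have hvw : G.Adj v w := G.mem_edgeSet.mp (hw ▸ e.2)
  refine ⟨w, ⟨hvw, by simpa [← hw] using hk⟩, fun w' ⟨hvw', hk'⟩ => ?_⟩
  by_contra hne
  refine C.valid (lineGraph_adj_of_mem (Sym2.mem_mk_left v w') hv ?_) (hk'.trans hk.symm)
  exact fun h => hne (Sym2.congr_right.mp ((congrArg Subtype.val h).trans hw))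

theorem even_ncard_verts_colorClassSubgraph [Finite V] (k : α) :
    Even (C.colorClassSubgraph k).verts.ncard := by
  have := Fintype.ofFinite (C.colorClassSubgraph k).verts
  rw [Set.ncard_eq_toFinset_card']
  exact (C.isMatching_colorClassSubgraph k).even_card

theorem image_edgesAt_eq_univ [Finite α] {v : V} (h : Nat.card α ≤ (G.edgesAt v).ncard) :
    C '' G.edgesAt v = Set.univ := by
  refine Set.eq_of_subset_of_ncard_le (Set.subset_univ _) ?_
  rwa [Set.ncard_univ, ((isClique_edgesAt v).injOn_hom C).ncard_image]

end Coloring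

end SimpleGraph

section Dragon

variable {d : ℕ}

theorem dragon_adj_iff {u v : Fin (d + 2)} :
    (dragon d).Adj u v ↔ (u : ℕ) ≠ v ∧ (dragonRel d u v ∨ dragonRel d v u) := by
  simp [dragon, Fin.val_inj]

theorem dragon_ncard_neighborSet_last (hd : 0 < d) :
    ((dragon d).neighborSet (Fin.last (d + 1))).ncard = 2 := by
  have : (dragon d).neighborSet (Fin.last (d + 1)) = {⟨0, by omega⟩, ⟨d, by omega⟩} := by
    ext w
    simp only [mem_neighborSet, dragon_adj_iff, dragonRel, Set.mem_insert_iff,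
      Set.mem_singleton_iff, Fin.ext_iff, Fin.val_last, true_and]
    omega
  rw [this, Set.ncard_pair (by simp [Fin.ext_iff]; omega)]

theorem dragon_ncard_neighborSet_of_ne_last (hd : 0 < d) {v : Fin (d + 2)}
    (hv : v ≠ Fin.last (d + 1)) : ((dragon d).neighborSet v).ncard = d := by
  rw [Ne, Fin.ext_iff, Fin.val_last] at hv
  obtain ⟨w, hwv, hw⟩ : ∃ w, w ≠ v ∧ (dragon d).neighborSet v = {v, w}ᶜ := by
    refine ⟨if (v : ℕ) = 0 then ⟨d, by omega⟩ else if (v : ℕ) = d then ⟨0, by omega⟩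
      else Fin.last _, ?_, ?_⟩
    · split_ifs <;> simp only [ne_eq, Fin.ext_iff, Fin.val_last] <;> omega
    · ext w
      simp only [mem_neighborSet, dragon_adj_iff, dragonRel, Set.mem_compl_iff,
        Set.mem_insert_iff, Set.mem_singleton_iff, Fin.ext_iff]
      split_ifs <;> simp only [Fin.val_last] <;> omega
  rw [hw, Set.ncard_compl, Set.ncard_pair hwv.symm, Nat.card_eq_fintype_card, Fintype.card_fin]
  omega

theorem dragon_ncard_edgesAt_le (hd : 2 ≤ d) (v : Fin (d + 2)) :
    ((dragon d).edgesAt v).ncard ≤ d := by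
  rw [ncard_edgesAt]
  obtain rfl | hv := eq_or_ne v (Fin.last (d + 1))
  · rw [dragon_ncard_neighborSet_last (by omega)]; exact hd
  · rw [dragon_ncard_neighborSet_of_ne_last (by omega) hv]

theorem dragon_lineGraph_not_colorable (hd : 3 ≤ d) : ¬(dragon d).lineGraph.Colorable d := by
  rintro ⟨C⟩
  have htip : ((dragon d).edgesAt (Fin.last (d + 1))).ncard = 2 := by
    rw [ncard_edgesAt, dragon_ncard_neighborSet_last (by omega)]
  have hlow {v : Fin (d + 2)} (hv : v ≠ Fin.last (d + 1)) :
      C '' (dragon d).edgesAt v = Set.univ :=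
    C.image_edgesAt_eq_univ (by
      rw [Nat.card_eq_fintype_card, Fintype.card_fin, ncard_edgesAt,
        dragon_ncard_neighborSet_of_ne_last (by omega) hv])
  have htip_colour : Even (d + 2) := by
    obtain ⟨e, he⟩ : ((dragon d).edgesAt (Fin.last (d + 1))).Nonempty :=
      Set.nonempty_of_ncard_ne_zero (by omega)
    have : (C.colorClassSubgraph (C e)).verts = Set.univ := by
      refine Set.eq_univ_of_forall fun v => ?_
      obtain rfl | hv := eq_or_ne v (Fin.last (d + 1))
      · exact ⟨e, he, rfl⟩
      · simp [hlow hv]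
    simpa [this] using C.even_ncard_verts_colorClassSubgraph (C e)
  have hother_colour : Even (d + 1) := by
    obtain ⟨k, hk⟩ : ∃ k, k ∉ C '' (dragon d).edgesAt (Fin.last (d + 1)) := by
      by_contra! h
      have := Set.ncard_image_le (f := C) (s := (dragon d).edgesAt (Fin.last (d + 1)))
      rw [Set.eq_univ_of_forall h, Set.ncard_univ, Nat.card_eq_fintype_card,
        Fintype.card_fin] at this
      omega
    have : (C.colorClassSubgraph k).verts = {Fin.last (d + 1)}ᶜ := by
      ext v
      obtain rfl | hv := eq_or_ne v (Fin.last (d + 1))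
      · simpa using hk
      · simp [hlow hv, hv]
    have h := C.even_ncard_verts_colorClassSubgraph k
    rwa [this, Set.ncard_compl, Set.ncard_singleton, Nat.card_eq_fintype_card,
      Fintype.card_fin] at h
  exact Nat.even_add_one.mp htip_colour hother_colour

theorem dragon_exists_forall_eq_of_not_injOn (hd : 4 ≤ d)
    (f : (dragon d).lineGraph →g (dragon d).lineGraph) (σ : Fin (d + 2) → Fin (d + 2))
    (hσ : ∀ v ≠ Fin.last (d + 1), Set.MapsTo f ((dragon d).edgesAt v) ((dragon d).edgesAt (σ v)))
    (hnot : ¬Set.InjOn σ {Fin.last (d + 1)}ᶜ) :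
    ∃ s, ∀ v ≠ Fin.last (d + 1), σ v = s := by
  simp only [Set.InjOn, Set.mem_compl_iff, Set.mem_singleton_iff, not_forall] at hnot
  obtain ⟨u, hu, w, hw, hσuw, huw⟩ := hnot
  have hmaps_u := hσ u hu
  have hmaps_w : Set.MapsTo f ((dragon d).edgesAt w) ((dragon d).edgesAt (σ u)) :=
    hσuw ▸ hσ w hw
  -- a vertex `t` other than `0`, `d`, `u`, `w` is adjacent to all vertices but the tip
  obtain ⟨t, ht, htu, htw⟩ : ∃ t : Fin (d + 2), (1 ≤ (t : ℕ) ∧ (t : ℕ) ≤ 3) ∧ t ≠ u ∧ t ≠ w :=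
    ⟨⟨if (u : ℕ) ≠ 1 ∧ (w : ℕ) ≠ 1 then 1 else if (u : ℕ) ≠ 2 ∧ (w : ℕ) ≠ 2 then 2 else 3,
      by split_ifs <;> omega⟩, by simp only [ne_eq, Fin.ext_iff]; split_ifs <;> omega⟩
  have htx : t ≠ Fin.last (d + 1) := by simp only [ne_eq, Fin.ext_iff, Fin.val_last]; omega
  have hadj_t {v : Fin (d + 2)} (hv : v ≠ Fin.last (d + 1)) (hvt : v ≠ t) :
      (dragon d).Adj v t := by
    simp only [ne_eq, Fin.ext_iff, Fin.val_last] at hv hvt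
    simp only [dragon_adj_iff, dragonRel]
    omega
  have hσt : σ t = σ u := f.eq_of_mapsTo_edgesAt (hσ t htx) hmaps_u hmaps_w
    (hadj_t hu htu.symm).symm (hadj_t hw htw.symm).symm huw
  rw [← hσt] at hmaps_u hmaps_w
  refine ⟨σ t, fun v hv => ?_⟩
  obtain rfl | hvt := eq_or_ne v t
  · rfl
  obtain rfl | hvu' := eq_or_ne v u
  · exact hσt.symm
  obtain rfl | hvw' := eq_or_ne v w
  · exact hσuw.symm.trans hσt.symm
  by_cases hvu : (dragon d).Adj v u
  · exact f.eq_of_mapsTo_edgesAt (hσ v hv) (hσ t htx) hmaps_u (hadj_t hv hvt) hvu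
      (fun h => htu (h ▸ rfl))
  · have hvw : (dragon d).Adj v w := by
      simp only [ne_eq, Fin.ext_iff, Fin.val_last] at hu hw hv hvu' hvw' huw
      simp only [dragon_adj_iff, dragonRel] at hvu ⊢
      omega
    exact f.eq_of_mapsTo_edgesAt (hσ v hv) (hσ t htx) hmaps_w (hadj_t hv hvt) hvw
      (fun h => htw (h ▸ rfl))

theorem dragon_lineGraph_hom_injective (hd : 4 ≤ d)
    (f : (dragon d).lineGraph →g (dragon d).lineGraph) : Function.Injective f := by
  have hstar {v : Fin (d + 2)} (hv : v ≠ Fin.last (d + 1)) :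
      3 < ((dragon d).edgesAt v).ncard := by
    rw [ncard_edgesAt, dragon_ncard_neighborSet_of_ne_last (by omega) hv]
    omega
  choose! σ hσ using fun v (hv : v ≠ Fin.last (d + 1)) => f.exists_mapsTo_edgesAt (hstar hv)
  by_cases hinj : Set.InjOn σ {Fin.last (d + 1)}ᶜ
  · exact f.injective_of_injOn _ σ hσ hinj
  obtain ⟨s, hs⟩ := dragon_exists_forall_eq_of_not_injOn hd f σ hσ hinj
  have hf (e : (dragon d).edgeSet) : f e ∈ (dragon d).edgesAt s := by
    obtain ⟨v, hv, hvx⟩ := exists_mem_ne_of_mem_edgeSet e (Fin.last (d + 1))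
    exact hs v hvx ▸ hσ v hvx hv
  exact absurd (Colorable.of_hom_of_forall_mem f hf
    (colorable_induce_of_ncard_le (dragon_ncard_edgesAt_le (by omega) s)))
    (dragon_lineGraph_not_colorable (by omega))

def dragonThreeEdge : Fin 7 → Sym2 (Fin 5) :=
  ![s(0, 1), s(0, 2), s(1, 2), s(1, 3), s(2, 3), s(0, 4), s(3, 4)]

/-- Row `i` is a proper `3`-edge-colouring of `D₃` with the edge `dragonThreeEdge i` deleted
(its `i`-th entry is irrelevant). -/
def dragonThreeColoring : Fin 7 → Fin 7 → Fin 3 :=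
  ![![0, 0, 1, 0, 2, 2, 1],
    ![0, 0, 1, 2, 0, 2, 1],
    ![0, 1, 0, 1, 2, 2, 0],
    ![2, 0, 1, 0, 2, 1, 0],
    ![0, 2, 1, 2, 0, 1, 0],
    ![0, 1, 2, 1, 0, 0, 2],
    ![0, 1, 2, 1, 0, 2, 0]]

theorem dragonThreeColoring_ne : ∀ i j k : Fin 7, j ≠ i → k ≠ i → j ≠ k →
    (∃ v, v ∈ dragonThreeEdge j ∧ v ∈ dragonThreeEdge k) →
    dragonThreeColoring i j ≠ dragonThreeColoring i k := by
  decide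

theorem exists_dragonThreeEdge_eq (e : (dragon 3).edgeSet) : ∃ i, dragonThreeEdge i = e := by
  obtain ⟨a, b, hadj, hab⟩ := exists_adj_and_coe_eq e
  rw [hab]
  clear hab
  revert a b
  simp only [dragon_adj_iff, dragonRel]
  decide

theorem dragon_three_lineGraph_induce_compl_colorable (e : (dragon 3).edgeSet) :
    ((dragon 3).lineGraph.induce {e}ᶜ).Colorable 3 := by
  choose idx hidx using exists_dragonThreeEdge_eq
  have hinj : Function.Injective idx := fun a b h => Subtype.ext (by rw [← hidx a, h, hidx b])
  refine ⟨Coloring.mk (fun x => dragonThreeColoring (idx e) (idx x)) fun {x y} hxy => ?_⟩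
  obtain ⟨hne, v, hvx, hvy⟩ := lineGraph_adj_iff_exists.mp hxy
  exact dragonThreeColoring_ne _ _ _ (fun h => x.2 (hinj h)) (fun h => y.2 (hinj h))
    (fun h => hne (hinj h)) ⟨v, by rwa [hidx], by rwa [hidx]⟩

theorem dragon_three_lineGraph_hom_injective
    (f : (dragon 3).lineGraph →g (dragon 3).lineGraph) : Function.Injective f := by
  refine Finite.injective_iff_surjective.mpr fun e => ?_
  by_contra! he
  exact dragon_lineGraph_not_colorable le_rfl
    (Colorable.of_hom_of_forall_mem f he (dragon_three_lineGraph_induce_compl_colorable e))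

end Dragon

/-- **Line graphs of dragons are cores.** For every `d ≥ 3`, every graph homomorphism
from `L(D_d)` to itself is a graph isomorphism. -/
theorem dragon_lineGraph_is_core (d : ℕ) (hd : 3 ≤ d)
    (f : (dragon d).lineGraph →g (dragon d).lineGraph) :
    ∃ e : (dragon d).lineGraph ≃g (dragon d).lineGraph, ∀ x, e x = f x := by
  refine f.exists_iso_of_injective ?_
  obtain rfl | hd4 := hd.eq_or_lt
  · exact dragon_three_lineGraph_hom_injective f
  · exact dragon_lineGraph_hom_injective hd4 f
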